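/- Let γ be a framed curve with Bishop frame {v, w, μ} and m̄(t) ≠ 0, n̄(t₀) ≠ 0. Define the support function g_x(t) = (x − γ(t))·w(t) for x ∈ ℝ³. Then: (1) g_x(t₀) = 0 iff x − γ(t₀) ∈ span{v(t₀), μ(t₀)}; (2) g_x(t₀) = g_x'(t₀) = 0 iff x − γ(t₀) = λ v(t₀) for some λ ∈ ℝ; (3) g_x(t₀) = g_x'(t₀) = g_x''(t₀) = 0 iff x − γ(t₀) = −(α(t₀)/m̄(t₀)) v(t₀), i.e. x is the evolute point E(t₀). -/

import Mathlib

open Matrix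

private lemma hasDerivAt_dotProduct3 {f g : ℝ → Fin 3 → ℝ} {f' g' : Fin 3 → ℝ} {t : ℝ}
    (hf : HasDerivAt f f' t) (hg : HasDerivAt g g' t) :
    HasDerivAt (fun s => f s ⬝ᵥ g s) (f' ⬝ᵥ g t + f t ⬝ᵥ g') t := by
  have hf' := hasDerivAt_pi.1 hf
  have hg' := hasDerivAt_pi.1 hg
  have h := (((hf' 0).mul (hg' 0)).add ((hf' 1).mul (hg' 1))).add ((hf' 2).mul (hg' 2))
  simp only [dotProduct, Fin.sum_univ_three]
  exact h.congr_deriv (by ring)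

private lemma hasDerivAt_cross3 {f g : ℝ → Fin 3 → ℝ} {f' g' : Fin 3 → ℝ} {t : ℝ}
    (hf : HasDerivAt f f' t) (hg : HasDerivAt g g' t) :
    HasDerivAt (fun s => f s ⨯₃ g s) (f' ⨯₃ g t + f t ⨯₃ g') t := by
  have hf' := hasDerivAt_pi.1 hf
  have hg' := hasDerivAt_pi.1 hg
  rw [hasDerivAt_pi]
  intro i
  fin_cases i
  · have h := ((hf' 1).mul (hg' 2)).sub ((hf' 2).mul (hg' 1))
    simp only [cross_apply, Pi.add_apply]
    exact h.congr_deriv (by simp; ring)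
  · have h := ((hf' 2).mul (hg' 0)).sub ((hf' 0).mul (hg' 2))
    simp only [cross_apply, Pi.add_apply]
    exact h.congr_deriv (by simp; ring)
  · have h := ((hf' 0).mul (hg' 1)).sub ((hf' 1).mul (hg' 0))
    simp only [cross_apply, Pi.add_apply]
    exact h.congr_deriv (by simp; ring)

/-- Characterizations via the support function g_x(t) = (x − γ(t))·w(t) for a
framed curve with a Bishop frame, with m̄(t₀) ≠ 0 and n̄(t₀) ≠ 0. -/
theorem support_function_characterization
    (γ v w : ℝ → Fin 3 → ℝ)
    (hγ : ContDiff ℝ (⊤ : ℕ∞) γ) (hv : ContDiff ℝ (⊤ : ℕ∞) v) (hw : ContDiff ℝ (⊤ : ℕ∞) w)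
    (hu₁ : ∀ t, v t ⬝ᵥ v t = 1) (hu₂ : ∀ t, w t ⬝ᵥ w t = 1)
    (horth : ∀ t, v t ⬝ᵥ w t = 0)
    (μ : ℝ → Fin 3 → ℝ) (hμ : ∀ t, μ t = v t ⨯₃ w t)
    (m' n' α : ℝ → ℝ)
    (hm' : ContDiff ℝ (⊤ : ℕ∞) m') (hn' : ContDiff ℝ (⊤ : ℕ∞) n') (hα : ContDiff ℝ (⊤ : ℕ∞) α)
    (hdv : ∀ t, deriv v t = m' t • μ t)
    (hdw : ∀ t, deriv w t = n' t • μ t)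
    (hdγ : ∀ t, deriv γ t = α t • μ t)
    (hm0 : ∀ t, m' t ≠ 0)
    (t₀ : ℝ) (hn0 : n' t₀ ≠ 0)
    (x : Fin 3 → ℝ) (g : ℝ → ℝ) (hg : ∀ t, g t = (x - γ t) ⬝ᵥ w t) :
    (g t₀ = 0 ↔ x - γ t₀ ∈ Submodule.span ℝ {v t₀, μ t₀}) ∧
    ((g t₀ = 0 ∧ deriv g t₀ = 0) ↔ ∃ lam : ℝ, x - γ t₀ = lam • v t₀) ∧
    ((g t₀ = 0 ∧ deriv g t₀ = 0 ∧ deriv (deriv g) t₀ = 0) ↔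
      x - γ t₀ = (-(α t₀ / m' t₀)) • v t₀) := by
  -- basic derivative facts
  have hvd : ∀ t, HasDerivAt v (m' t • μ t) t := fun t => by
    have h := ((hv.differentiable (by simp)) t).hasDerivAt
    rwa [hdv t] at h
  have hwd : ∀ t, HasDerivAt w (n' t • μ t) t := fun t => by
    have h := ((hw.differentiable (by simp)) t).hasDerivAt
    rwa [hdw t] at h
  have hγd : ∀ t, HasDerivAt γ (α t • μ t) t := fun t => by
    have h := ((hγ.differentiable (by simp)) t).hasDerivAt
    rwa [hdγ t] at h
  have hyd : ∀ t, HasDerivAt (fun s => x - γ s) (-(α t • μ t)) t :=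
    fun t => (hγd t).const_sub x
  have hμeq : μ = fun t => v t ⨯₃ w t := funext hμ
  have hμd : ∀ t, HasDerivAt μ ((m' t • μ t) ⨯₃ w t + v t ⨯₃ (n' t • μ t)) t := fun t => by
    have h := hasDerivAt_cross3 (hvd t) (hwd t)
    rwa [← hμeq] at h
  -- dot product facts
  have hvμ : ∀ t, v t ⬝ᵥ μ t = 0 := fun t => by rw [hμ t]; exact dot_self_cross _ _
  have hwμ : ∀ t, w t ⬝ᵥ μ t = 0 := fun t => by rw [hμ t]; exact dot_cross_self _ _
  have hμv : ∀ t, μ t ⬝ᵥ v t = 0 := fun t => by rw [dotProduct_comm]; exact hvμ t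
  have hμw : ∀ t, μ t ⬝ᵥ w t = 0 := fun t => by rw [dotProduct_comm]; exact hwμ t
  have hwv : ∀ t, w t ⬝ᵥ v t = 0 := fun t => by rw [dotProduct_comm]; exact horth t
  have hμμ : ∀ t, μ t ⬝ᵥ μ t = 1 := fun t => by
    rw [hμ t, cross_dot_cross, hu₁ t, hu₂ t, horth t]; ring
  -- first derivative of g
  have hgeq : g = fun t => (x - γ t) ⬝ᵥ w t := funext hg
  have hgd : ∀ t, HasDerivAt g (n' t * ((x - γ t) ⬝ᵥ μ t)) t := fun t => by
    have h := hasDerivAt_dotProduct3 (hyd t) (hwd t)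
    rw [hgeq]
    convert h using 1
    simp only [neg_dotProduct, smul_dotProduct, dotProduct_smul, hμw t, smul_eq_mul,
      mul_zero, neg_zero, zero_add]
  have hdg : deriv g = fun t => n' t * ((x - γ t) ⬝ᵥ μ t) :=
    funext fun t => (hgd t).deriv
  -- cross product identities at t₀
  have e1 := hu₁ t₀; have e2 := hu₂ t₀; have e3 := horth t₀
  simp only [dotProduct, Fin.sum_univ_three] at e1 e2 e3
  have hμxw : μ t₀ ⨯₃ w t₀ = -(v t₀) := by
    rw [hμ t₀]
    ext i
    fin_cases i <;> simp [cross_apply]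
    · linear_combination (w t₀ 0) * e3 - (v t₀ 0) * e2
    · linear_combination (w t₀ 1) * e3 - (v t₀ 1) * e2
    · linear_combination (w t₀ 2) * e3 - (v t₀ 2) * e2
  have hvxμ : v t₀ ⨯₃ μ t₀ = -(w t₀) := by
    rw [hμ t₀]
    ext i
    fin_cases i <;> simp [cross_apply]
    · linear_combination (v t₀ 0) * e3 - (w t₀ 0) * e1
    · linear_combination (v t₀ 1) * e3 - (w t₀ 1) * e1
    · linear_combination (v t₀ 2) * e3 - (w t₀ 2) * e1
  -- second derivative of g at t₀
  have hcd : HasDerivAt (fun t => (x - γ t) ⬝ᵥ μ t)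
      (-α t₀ - m' t₀ * ((x - γ t₀) ⬝ᵥ v t₀) - n' t₀ * ((x - γ t₀) ⬝ᵥ w t₀)) t₀ := by
    have h := hasDerivAt_dotProduct3 (hyd t₀) (hμd t₀)
    convert h using 1
    simp only [_root_.map_smul, LinearMap.smul_apply, dotProduct_add, dotProduct_smul,
      smul_dotProduct, neg_dotProduct, hμμ t₀, hμxw, hvxμ, dotProduct_neg, smul_eq_mul]
    ring
  have hn'd : HasDerivAt n' (deriv n' t₀) t₀ := ((hn'.differentiable (by simp)) t₀).hasDerivAt
  have hddg : deriv (deriv g) t₀ = deriv n' t₀ * ((x - γ t₀) ⬝ᵥ μ t₀) +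
      n' t₀ * (-α t₀ - m' t₀ * ((x - γ t₀) ⬝ᵥ v t₀) - n' t₀ * ((x - γ t₀) ⬝ᵥ w t₀)) := by
    rw [hdg]
    exact (hn'd.mul hcd).deriv
  -- orthonormal decomposition at t₀
  have hdec : x - γ t₀ = ((x - γ t₀) ⬝ᵥ v t₀) • v t₀ + ((x - γ t₀) ⬝ᵥ w t₀) • w t₀ +
      ((x - γ t₀) ⬝ᵥ μ t₀) • μ t₀ := by
    set M3 : Matrix (Fin 3) (Fin 3) ℝ := Matrix.of ![v t₀, w t₀, μ t₀] with hM3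
    have hMMT : M3 * M3ᵀ = 1 := by
      ext i j
      rw [Matrix.mul_apply']
      have hcol : (fun k => M3ᵀ k j) = M3 j := rfl
      rw [hcol]
      have f4 := hvμ t₀; have f5 := hwμ t₀; have f6 := hμμ t₀
      simp only [dotProduct, Fin.sum_univ_three] at f4 f5 f6
      fin_cases i <;> fin_cases j <;>
        simp [hM3, Matrix.one_apply, dotProduct, Fin.sum_univ_three] <;>
        first
          | linear_combination e1 | linear_combination e2 | linear_combination e3
          | linear_combination f4 | linear_combination f5 | linear_combination f6
    have hMTM : M3ᵀ * M3 = 1 := mul_eq_one_comm.mp hMMT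
    have h := congrArg (fun A : Matrix (Fin 3) (Fin 3) ℝ => A.mulVec (x - γ t₀)) hMTM
    simp only [Matrix.one_mulVec] at h
    conv_lhs => rw [← h]
    ext i
    fin_cases i <;>
      simp [hM3, Matrix.mulVec, Matrix.mul_apply, dotProduct, Fin.sum_univ_three,
        Matrix.transpose_apply, Matrix.vecHead, Matrix.vecTail] <;> ring
  have hgval : g t₀ = (x - γ t₀) ⬝ᵥ w t₀ := hg t₀
  have hdgval : deriv g t₀ = n' t₀ * ((x - γ t₀) ⬝ᵥ μ t₀) := (hgd t₀).deriv
  refine ⟨⟨?_, ?_⟩, ⟨?_, ?_⟩, ⟨?_, ?_⟩⟩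
  · intro h0
    rw [Submodule.mem_span_pair]
    refine ⟨(x - γ t₀) ⬝ᵥ v t₀, (x - γ t₀) ⬝ᵥ μ t₀, ?_⟩
    have hb0 : (x - γ t₀) ⬝ᵥ w t₀ = 0 := by rw [← hgval]; exact h0
    conv_rhs => rw [hdec]
    rw [hb0]; simp
  · intro hmem
    rw [Submodule.mem_span_pair] at hmem
    obtain ⟨s, r, hsr⟩ := hmem
    rw [hgval, ← hsr]
    simp [add_dotProduct, smul_dotProduct, horth t₀, hμw t₀]
  · rintro ⟨h0, h1⟩
    have hb0 : (x - γ t₀) ⬝ᵥ w t₀ = 0 := by rw [← hgval]; exact h0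
    have hc0 : (x - γ t₀) ⬝ᵥ μ t₀ = 0 := by
      rw [hdgval] at h1
      exact (mul_eq_zero.mp h1).resolve_left hn0
    refine ⟨(x - γ t₀) ⬝ᵥ v t₀, ?_⟩
    conv_lhs => rw [hdec]
    rw [hb0, hc0]; simp
  · rintro ⟨lam, hl⟩
    have hb0 : (x - γ t₀) ⬝ᵥ w t₀ = 0 := by rw [hl, smul_dotProduct, horth t₀, smul_zero]
    have hc0 : (x - γ t₀) ⬝ᵥ μ t₀ = 0 := by rw [hl, smul_dotProduct, hvμ t₀, smul_zero]
    exact ⟨by rw [hgval, hb0], by rw [hdgval, hc0, mul_zero]⟩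
  · rintro ⟨h0, h1, h2⟩
    have hb0 : (x - γ t₀) ⬝ᵥ w t₀ = 0 := by rw [← hgval]; exact h0
    have hc0 : (x - γ t₀) ⬝ᵥ μ t₀ = 0 := by
      rw [hdgval] at h1
      exact (mul_eq_zero.mp h1).resolve_left hn0
    rw [hddg, hb0, hc0] at h2
    have h3 : -α t₀ - m' t₀ * ((x - γ t₀) ⬝ᵥ v t₀) = 0 := by
      have h4 : n' t₀ * (-α t₀ - m' t₀ * ((x - γ t₀) ⬝ᵥ v t₀)) = 0 := by
        rw [mul_zero, zero_add, mul_zero, sub_zero] at h2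
        exact h2
      exact (mul_eq_zero.mp h4).resolve_left hn0
    have ha : (x - γ t₀) ⬝ᵥ v t₀ = -(α t₀ / m' t₀) := by
      have hm := hm0 t₀
      rw [← neg_div, eq_div_iff hm]
      linear_combination -h3
    conv_lhs => rw [hdec]
    rw [hb0, hc0, ha]; simp
  · intro hl
    have hb0 : (x - γ t₀) ⬝ᵥ w t₀ = 0 := by rw [hl, smul_dotProduct, horth t₀, smul_zero]
    have hc0 : (x - γ t₀) ⬝ᵥ μ t₀ = 0 := by rw [hl, smul_dotProduct, hvμ t₀, smul_zero]
    have ha : (x - γ t₀) ⬝ᵥ v t₀ = -(α t₀ / m' t₀) := by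
      rw [hl, smul_dotProduct, hu₁ t₀, smul_eq_mul, mul_one]
    refine ⟨by rw [hgval, hb0], by rw [hdgval, hc0, mul_zero], ?_⟩
    rw [hddg, hb0, hc0, ha]
    have hm := hm0 t₀
    field_simp
    ring
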